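/- arXiv:2112.10596 — 2 statements merged into one kernel-verified Lean document; each statement's English description precedes it below -/
import Mathlib

section
/- Two measurements m_1 = (f_i)_{i=1}^{n_1} and m_2 = (g_j)_{j=1}^{n_2} on a state space K (effects in E(K) summing to 1_K) admit a joint measurement (h_{ij}) in E(K) with marginals f_i = Σ_j h_{ij}, g_j = Σ_i h_{ij} if and only if there exists a finite family (h_λ)_{λ∈Λ} of effects in E(K) with Σ_λ h_λ = 1_K and conditional probability distributions p(i|1,λ), p(j|2,λ) such that f_i = Σ_λ p(i|1,λ) h_λ and g_j = Σ_λ p(j|2,λ) h_λ. -/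
/-! A joint measurement `h i j` is a common measurement indexed by the pairs `(i, j)`, of which both
marginals are deterministic post-processings. Conversely, from `h λ` and the distributions
`p (· | λ)`, `q (· | λ)`, the effects `∑ λ, p (i | λ) q (j | λ) h λ` form a joint measurement: they
lie between `0` and `∑ λ, h λ = 1`, and summing out `j` (resp. `i`) leaves `f i` (resp. `g j`)
because `q (· | λ)` (resp. `p (· | λ)`) sums to one. -/

open Finset

variable {V : Type*} [NormedAddCommGroup V] [NormedSpace ℝ V] [FiniteDimensional ℝ V]

/-- The effect algebra `E(K)`: affine functions with values in `[0,1]` on `K`. -/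
def effectAlgebra (K : Set V) : Set (V →ᵃ[ℝ] ℝ) :=
  {f | ∀ x ∈ K, f x ∈ Set.Icc (0 : ℝ) 1}

theorem AffineMap.sum_apply {k W P V₂ ι : Type*} [Ring k] [AddCommGroup W] [Module k W]
    [AddTorsor W P] [AddCommGroup V₂] [Module k V₂] (s : Finset ι) (F : ι → P →ᵃ[k] V₂)
    (x : P) : (∑ i ∈ s, F i) x = ∑ i ∈ s, F i x :=
  map_sum (AddMonoidHom.mk' (fun f : P →ᵃ[k] V₂ => f x) fun _ _ => rfl) F s

section StochasticMatrix

variable {ι Λ : Type*} [Fintype ι] {p : ι → Λ → ℝ}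

theorem le_one_of_sum_eq_one (hp : ∀ i lam, 0 ≤ p i lam) (hp₁ : ∀ lam, ∑ i, p i lam = 1)
    (i : ι) (lam : Λ) : p i lam ≤ 1 :=
  hp₁ lam ▸ single_le_sum (fun i' _ => hp i' lam) (mem_univ i)

theorem sum_sum_mul_of_sum_eq_one [Fintype Λ] (hp₁ : ∀ lam, ∑ i, p i lam = 1) (a : Λ → ℝ) :
    ∑ i, ∑ lam, p i lam * a lam = ∑ lam, a lam := by
  rw [sum_comm]
  simp only [← sum_mul, hp₁, one_mul]

end StochasticMatrix

section Measurements

variable {E : Type*} [NormedAddCommGroup E] [NormedSpace ℝ E]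
  {ι κ Λ : Type*} [Fintype ι] [Fintype κ] [Fintype Λ]

def IsJointMeasurement (K : Set E) (f : ι → E →ᵃ[ℝ] ℝ) (g : κ → E →ᵃ[ℝ] ℝ)
    (h : ι → κ → E →ᵃ[ℝ] ℝ) : Prop :=
  (∀ i j, h i j ∈ effectAlgebra K) ∧
    (∀ i, ∀ x ∈ K, f i x = ∑ j, h i j x) ∧ (∀ j, ∀ x ∈ K, g j x = ∑ i, h i j x)

def IsCommonPostprocessing (K : Set E) (f : ι → E →ᵃ[ℝ] ℝ) (g : κ → E →ᵃ[ℝ] ℝ)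
    (h : Λ → E →ᵃ[ℝ] ℝ) (p : ι → Λ → ℝ) (q : κ → Λ → ℝ) : Prop :=
  (∀ lam, h lam ∈ effectAlgebra K) ∧ (∀ x ∈ K, ∑ lam, h lam x = 1) ∧
    (∀ i lam, 0 ≤ p i lam) ∧ (∀ lam, ∑ i, p i lam = 1) ∧
    (∀ j lam, 0 ≤ q j lam) ∧ (∀ lam, ∑ j, q j lam = 1) ∧
    (∀ i, ∀ x ∈ K, f i x = ∑ lam, p i lam * h lam x) ∧
    (∀ j, ∀ x ∈ K, g j x = ∑ lam, q j lam * h lam x)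

theorem sum_smul_mem_effectAlgebra {K : Set E} {h : Λ → E →ᵃ[ℝ] ℝ} {c : Λ → ℝ}
    (hh : ∀ lam, h lam ∈ effectAlgebra K) (hh₁ : ∀ x ∈ K, ∑ lam, h lam x = 1)
    (hc : ∀ lam, c lam ∈ Set.Icc (0 : ℝ) 1) : ∑ lam, c lam • h lam ∈ effectAlgebra K := by
  intro x hx
  simp only [AffineMap.sum_apply, AffineMap.coe_smul, Pi.smul_apply, smul_eq_mul]
  refine ⟨sum_nonneg fun lam _ => mul_nonneg (hc lam).1 (hh lam x hx).1, ?_⟩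
  calc ∑ lam, c lam * h lam x ≤ ∑ lam, h lam x :=
        sum_le_sum fun lam _ => mul_le_of_le_one_left (hh lam x hx).1 (hc lam).2
    _ = 1 := hh₁ x hx

theorem IsCommonPostprocessing.isJointMeasurement {K : Set E} {f : ι → E →ᵃ[ℝ] ℝ}
    {g : κ → E →ᵃ[ℝ] ℝ} {h : Λ → E →ᵃ[ℝ] ℝ} {p : ι → Λ → ℝ} {q : κ → Λ → ℝ}
    (H : IsCommonPostprocessing K f g h p q) :
    IsJointMeasurement K f g fun i j => ∑ lam, (p i lam * q j lam) • h lam := by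
  obtain ⟨hh, hh₁, hp, hp₁, hq, hq₁, hf, hg⟩ := H
  have eval : ∀ i j x, (∑ lam, (p i lam * q j lam) • h lam) x =
      ∑ lam, p i lam * q j lam * h lam x := fun i j x => by
    simp only [AffineMap.sum_apply, AffineMap.coe_smul, Pi.smul_apply, smul_eq_mul]
  refine ⟨fun i j => sum_smul_mem_effectAlgebra hh hh₁ fun lam =>
      ⟨mul_nonneg (hp i lam) (hq j lam),
        mul_le_one₀ (le_one_of_sum_eq_one hp hp₁ i lam) (hq j lam)
          (le_one_of_sum_eq_one hq hq₁ j lam)⟩, ?_, ?_⟩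
  · intro i x hx
    simp only [eval, hf i x hx, mul_assoc, mul_left_comm (p i _)]
    rw [sum_sum_mul_of_sum_eq_one hq₁]
  · intro j x hx
    simp only [eval, hg j x hx, mul_assoc]
    rw [sum_sum_mul_of_sum_eq_one hp₁]

theorem IsCommonPostprocessing.comp_equiv {Λ' : Type*} [Fintype Λ'] {K : Set E}
    {f : ι → E →ᵃ[ℝ] ℝ} {g : κ → E →ᵃ[ℝ] ℝ} {h : Λ → E →ᵃ[ℝ] ℝ} {p : ι → Λ → ℝ}
    {q : κ → Λ → ℝ} (H : IsCommonPostprocessing K f g h p q) (e : Λ' ≃ Λ) :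
    IsCommonPostprocessing K f g (h ∘ e) (fun i => p i ∘ e) (fun j => q j ∘ e) := by
  obtain ⟨hh, hh₁, hp, hp₁, hq, hq₁, hf, hg⟩ := H
  refine ⟨fun _ => hh _, fun x hx => ?_, fun i _ => hp i _, fun _ => hp₁ _, fun j _ => hq j _,
    fun _ => hq₁ _, fun i x hx => ?_, fun j x hx => ?_⟩
  · simpa only [Function.comp_apply, e.sum_comp (fun lam => h lam x)] using hh₁ x hx
  · simpa only [Function.comp_apply, e.sum_comp (fun lam => p i lam * h lam x)] using hf i x hx
  · simpa only [Function.comp_apply, e.sum_comp (fun lam => q j lam * h lam x)] using hg j x hx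

theorem IsJointMeasurement.isCommonPostprocessing [DecidableEq ι] [DecidableEq κ] {K : Set E}
    {f : ι → E →ᵃ[ℝ] ℝ} {g : κ → E →ᵃ[ℝ] ℝ} {h : ι → κ → E →ᵃ[ℝ] ℝ}
    (H : IsJointMeasurement K f g h) (hf₁ : ∀ x ∈ K, ∑ i, f i x = 1) :
    IsCommonPostprocessing K f g (fun ij : ι × κ => h ij.1 ij.2)
      (fun i ij => if ij.1 = i then 1 else 0) (fun j ij => if ij.2 = j then 1 else 0) := by
  obtain ⟨hh, hf, hg⟩ := H
  refine ⟨fun _ => hh _ _, fun x hx => ?_, fun _ _ => by positivity, fun _ => by simp,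
    fun _ _ => by positivity, fun _ => by simp, fun i x hx => ?_, fun j x hx => ?_⟩
  · simp only [Fintype.sum_prod_type, ← hf₁ x hx, hf _ x hx]
  · simp [Fintype.sum_prod_type, ite_mul, hf i x hx]
  · simp [Fintype.sum_prod_type_right, ite_mul, hg j x hx]

end Measurements

theorem jointMeasurement_iff_postprocessing_general
    (K : Set V)
    {n₁ n₂ : ℕ} (f : Fin n₁ → (V →ᵃ[ℝ] ℝ)) (g : Fin n₂ → (V →ᵃ[ℝ] ℝ))
    (hfsum : ∀ x ∈ K, ∑ i, f i x = 1) :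
    (∃ h : Fin n₁ → Fin n₂ → (V →ᵃ[ℝ] ℝ),
      (∀ i j, h i j ∈ effectAlgebra K) ∧
      (∀ i, ∀ x ∈ K, f i x = ∑ j, h i j x) ∧
      (∀ j, ∀ x ∈ K, g j x = ∑ i, h i j x)) ↔
    (∃ (N : ℕ) (h : Fin N → (V →ᵃ[ℝ] ℝ))
        (p : Fin n₁ → Fin N → ℝ) (q : Fin n₂ → Fin N → ℝ),
      (∀ lam, h lam ∈ effectAlgebra K) ∧
      (∀ x ∈ K, ∑ lam, h lam x = 1) ∧
      (∀ i lam, 0 ≤ p i lam) ∧ (∀ lam, ∑ i, p i lam = 1) ∧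
      (∀ j lam, 0 ≤ q j lam) ∧ (∀ lam, ∑ j, q j lam = 1) ∧
      (∀ i, ∀ x ∈ K, f i x = ∑ lam, p i lam * h lam x) ∧
      (∀ j, ∀ x ∈ K, g j x = ∑ lam, q j lam * h lam x)) := by
  constructor
  · rintro ⟨h, hjoint⟩
    exact ⟨_, _, _, _,
      (IsJointMeasurement.isCommonPostprocessing hjoint hfsum).comp_equiv finProdFinEquiv.symm⟩
  · rintro ⟨N, h, p, q, hcommon⟩
    exact ⟨_, IsCommonPostprocessing.isJointMeasurement hcommon⟩

/-- Two measurements admit a joint measurement if and only if they are both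
post-processings of a single common measurement. -/
theorem jointMeasurement_iff_postprocessing
    (K : Set V) (hKcomp : IsCompact K) (hKconv : Convex ℝ K)
    {n₁ n₂ : ℕ} (f : Fin n₁ → (V →ᵃ[ℝ] ℝ)) (g : Fin n₂ → (V →ᵃ[ℝ] ℝ))
    (hf : ∀ i, f i ∈ effectAlgebra K) (hg : ∀ j, g j ∈ effectAlgebra K)
    (hfsum : ∀ x ∈ K, ∑ i, f i x = 1) (hgsum : ∀ x ∈ K, ∑ j, g j x = 1) :
    (∃ h : Fin n₁ → Fin n₂ → (V →ᵃ[ℝ] ℝ),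
      (∀ i j, h i j ∈ effectAlgebra K) ∧
      (∀ i, ∀ x ∈ K, f i x = ∑ j, h i j x) ∧
      (∀ j, ∀ x ∈ K, g j x = ∑ i, h i j x)) ↔
    (∃ (N : ℕ) (h : Fin N → (V →ᵃ[ℝ] ℝ))
        (p : Fin n₁ → Fin N → ℝ) (q : Fin n₂ → Fin N → ℝ),
      (∀ lam, h lam ∈ effectAlgebra K) ∧
      (∀ x ∈ K, ∑ lam, h lam x = 1) ∧
      (∀ i lam, 0 ≤ p i lam) ∧ (∀ lam, ∑ i, p i lam = 1) ∧
      (∀ j lam, 0 ≤ q j lam) ∧ (∀ lam, ∑ j, q j lam = 1) ∧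
      (∀ i, ∀ x ∈ K, f i x = ∑ lam, p i lam * h lam x) ∧
      (∀ j, ∀ x ∈ K, g j x = ∑ lam, q j lam * h lam x)) :=
  jointMeasurement_iff_postprocessing_general K f g hfsum
end

section
/- Let K = S_3 be a triangle (2-simplex) and let S(E) be its circumscribed disc, with E the effects of S(E) restricted to K. Then every pair of measurements with effects in E is E(K)-compatible (since K is a simplex), but there exists a pair of two-outcome measurements with effects in E that is E-incompatible (i.e., admits no joint measurement with effects in E). -/
/-!
On the triangle `K` the effects `f i`, `g j` are determined by their values at the three vertices,
and the affine function taking the value `f i v * g j v` at each vertex `v` is a joint measurement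
there: `K` is a simplex, so the product construction of classical probability works.

On the whole disc this fails for the "spin" effects `X = (1 + x)/2` and `Y = (1 + y)/2`. A joint
effect `h₁₁` must satisfy `max 0 (X + Y - 1) ≤ h₁₁ ≤ min X Y` on the disc, and its equalities on
`K` hold on all of `ℝ²` because the vertices of `K` affinely span the plane. Evaluating at the
points `(±3/5, ±3/5)` of the disc and using that `h₁₁` is affine,
`h₁₁(p) + h₁₁(-p) = h₁₁(q) + h₁₁(-q)`, gives `3/5 ≤ 2/5`.
-/

open Finset

/-- The disc `S(E)`: the state space of the restricted theory. -/
def disc : Set (ℝ × ℝ) := {x | x.1 ^ 2 + x.2 ^ 2 ≤ 1}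

/-- The triangle `K = S₃` inscribed in the disc. -/
noncomputable def triangle : Set (ℝ × ℝ) :=
  convexHull ℝ {((0 : ℝ), (1 : ℝ)), (-(Real.sqrt 3) / 2, -(1 / 2 : ℝ)),
    (Real.sqrt 3 / 2, -(1 / 2 : ℝ))}

/-- The restricted effects `E`: affine functions with values in `[0,1]` on the
whole disc `S(E)` (restricted to `K`). -/
def discEffects : Set ((ℝ × ℝ) →ᵃ[ℝ] ℝ) :=
  {f | ∀ x ∈ disc, f x ∈ Set.Icc (0 : ℝ) 1}

namespace AffineMap

variable {k V₁ P₁ V₂ : Type*} [Ring k] [AddCommGroup V₁] [Module k V₁] [AddTorsor V₁ P₁]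
  [AddCommGroup V₂] [Module k V₂]

theorem finset_sum_apply {ι : Type*} (s : Finset ι) (F : ι → P₁ →ᵃ[k] V₂) (x : P₁) :
    (∑ i ∈ s, F i) x = ∑ i ∈ s, F i x :=
  map_sum (AddMonoidHom.mk' (fun F : P₁ →ᵃ[k] V₂ ↦ F x) fun _ _ ↦ rfl) F s

theorem apply_add_apply_of_add_eq (F : V₁ →ᵃ[k] V₂) {p q r s : V₁} (h : p + q = r + s) :
    F p + F q = F r + F s := by
  have hvsub : F p - F r = F s - F q := by
    rw [← vsub_eq_sub, ← F.linearMap_vsub, ← vsub_eq_sub, ← F.linearMap_vsub, vsub_eq_sub,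
      vsub_eq_sub, sub_eq_sub_iff_add_eq_add.mpr (h.trans (add_comm r s))]
  rw [sub_eq_sub_iff_add_eq_add.mp hvsub, add_comm]

end AffineMap

namespace AffineBasis

section Ring

variable {ι k V P V₂ : Type*} [Ring k] [AddCommGroup V] [Module k V] [AddTorsor V P]
  [AddCommGroup V₂] [Module k V₂] (b : AffineBasis ι k P)

theorem affineMap_ext {F G : P →ᵃ[k] V₂} (h : ∀ i, F (b i) = G (b i)) : F = G :=
  AffineMap.ext_on b.tot (by rintro _ ⟨i, rfl⟩; exact h i)

end Ring

section CommRing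

variable {ι k V P : Type*} [Fintype ι] [CommRing k] [AddCommGroup V] [Module k V]
  [AddTorsor V P] (b : AffineBasis ι k P)

noncomputable def interpolate (t : ι → k) : P →ᵃ[k] k := ∑ i, t i • b.coord i

@[simp]
theorem interpolate_apply_self (t : ι → k) (j : ι) : b.interpolate t (b j) = t j := by
  classical
  simp [interpolate, AffineMap.finset_sum_apply, coord_apply]

end CommRing

variable {ι k V : Type*} [Fintype ι] [Field k] [LinearOrder k] [IsStrictOrderedRing k]
  [AddCommGroup V] [Module k V] (b : AffineBasis ι k V)

theorem exists_joint_of_nonneg_of_sum_eq_one {α β : Type*} [Fintype α] [Fintype β]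
    (f : α → V →ᵃ[k] k) (g : β → V →ᵃ[k] k) (hf₀ : ∀ a i, 0 ≤ f a (b i))
    (hg₀ : ∀ c i, 0 ≤ g c (b i)) (hf₁ : ∀ i, ∑ a, f a (b i) = 1) (hg₁ : ∀ i, ∑ c, g c (b i) = 1) :
    ∃ h : α → β → V →ᵃ[k] k,
      (∀ a c, ∀ x ∈ convexHull k (Set.range b), h a c x ∈ Set.Icc (0 : k) 1) ∧
      (∀ a, ∑ c, h a c = f a) ∧ (∀ c, ∑ a, h a c = g c) := by
  have hf_le : ∀ a i, f a (b i) ≤ 1 := fun a i ↦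
    hf₁ i ▸ single_le_sum (fun a _ ↦ hf₀ a i) (mem_univ a)
  have hg_le : ∀ c i, g c (b i) ≤ 1 := fun c i ↦
    hg₁ i ▸ single_le_sum (fun c _ ↦ hg₀ c i) (mem_univ c)
  refine ⟨fun a c ↦ b.interpolate fun i ↦ f a (b i) * g c (b i), fun a c x hx ↦ ?_,
    fun a ↦ b.affineMap_ext fun i ↦ ?_, fun c ↦ b.affineMap_ext fun i ↦ ?_⟩
  · refine convexHull_min ?_ ((convex_Icc (0 : k) 1).affine_preimage _) hx
    rintro _ ⟨i, rfl⟩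
    rw [Set.mem_preimage, interpolate_apply_self]
    exact ⟨mul_nonneg (hf₀ a i) (hg₀ c i), mul_le_one₀ (hf_le a i) (hg₀ c i) (hg_le c i)⟩
  · simp [AffineMap.finset_sum_apply, ← mul_sum, hg₁]
  · simp [AffineMap.finset_sum_apply, ← sum_mul, hf₁]

end AffineBasis

noncomputable def triangleVertex : Fin 3 → ℝ × ℝ :=
  ![(0, 1), (-√3 / 2, -(1 / 2)), (√3 / 2, -(1 / 2))]

theorem affineIndependent_triangleVertex : AffineIndependent ℝ triangleVertex := by
  rw [affineIndependent_iff_of_fintype]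
  intro w hw₀ hw₁
  rw [weightedVSub_eq_linear_combination _ hw₀, Fin.sum_univ_three] at hw₁
  rw [Fin.sum_univ_three] at hw₀
  have hx : w 0 * 0 + w 1 * (-√3 / 2) + w 2 * (√3 / 2) = 0 := congrArg Prod.fst hw₁
  have hy : w 0 * 1 + w 1 * (-(1 / 2)) + w 2 * (-(1 / 2)) = 0 := congrArg Prod.snd hw₁
  have h₂₁ : w 2 = w 1 := by
    have : √3 * (w 2 - w 1) = 0 := by linear_combination 2 * hx
    linarith [(mul_eq_zero.mp this).resolve_left (by positivity)]
  have h₀ : w 0 = 0 := by linarith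
  have h₁ : w 1 = 0 := by linarith
  have h₂ : w 2 = 0 := by linarith
  intro i
  fin_cases i <;> assumption

noncomputable def triangleBasis : AffineBasis (Fin 3) ℝ (ℝ × ℝ) :=
  ⟨triangleVertex, affineIndependent_triangleVertex,
    affineIndependent_triangleVertex.affineSpan_eq_top_iff_card_eq_finrank_add_one.mpr (by simp)⟩

theorem triangle_eq_convexHull : triangle = convexHull ℝ (Set.range triangleBasis) := by
  change _ = convexHull ℝ (Set.range triangleVertex)
  simp only [triangle, triangleVertex, Matrix.range_cons, Matrix.range_empty, Set.union_empty,
    Set.singleton_union]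

theorem triangleBasis_mem_triangle (i : Fin 3) : triangleBasis i ∈ triangle :=
  triangle_eq_convexHull ▸ subset_convexHull ℝ _ (Set.mem_range_self i)

theorem triangleBasis_mem_disc (i : Fin 3) : triangleBasis i ∈ disc := by
  have h3 : √3 ^ 2 = 3 := Real.sq_sqrt (by norm_num)
  change triangleVertex i ∈ disc
  fin_cases i <;> norm_num [triangleVertex, disc, div_pow, h3]

theorem AffineMap.eq_of_eqOn_triangle {F G : (ℝ × ℝ) →ᵃ[ℝ] ℝ} (h : Set.EqOn F G triangle) :
    F = G :=
  triangleBasis.affineMap_ext fun i ↦ h (triangleBasis_mem_triangle i)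

noncomputable def effectX : (ℝ × ℝ) →ᵃ[ℝ] ℝ :=
  (2⁻¹ : ℝ) • ((LinearMap.fst ℝ ℝ ℝ).toAffineMap + AffineMap.const ℝ (ℝ × ℝ) 1)

noncomputable def effectY : (ℝ × ℝ) →ᵃ[ℝ] ℝ :=
  (2⁻¹ : ℝ) • ((LinearMap.snd ℝ ℝ ℝ).toAffineMap + AffineMap.const ℝ (ℝ × ℝ) 1)

@[simp] theorem effectX_apply (x : ℝ × ℝ) : effectX x = (1 + x.1) / 2 := by
  show 2⁻¹ * (x.1 + 1) = _
  ring

@[simp] theorem effectY_apply (x : ℝ × ℝ) : effectY x = (1 + x.2) / 2 := by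
  show 2⁻¹ * (x.2 + 1) = _
  ring

theorem effectX_mem_discEffects : effectX ∈ discEffects := by
  rintro x (hx : x.1 ^ 2 + x.2 ^ 2 ≤ 1)
  obtain ⟨hlo, hhi⟩ :=
    abs_le.mp ((sq_le_one_iff_abs_le_one x.1).mp (by nlinarith [sq_nonneg x.2]))
  rw [effectX_apply, Set.mem_Icc]
  constructor <;> linarith

theorem effectY_mem_discEffects : effectY ∈ discEffects := by
  rintro x (hx : x.1 ^ 2 + x.2 ^ 2 ≤ 1)
  obtain ⟨hlo, hhi⟩ :=
    abs_le.mp ((sq_le_one_iff_abs_le_one x.2).mp (by nlinarith [sq_nonneg x.1]))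
  rw [effectY_apply, Set.mem_Icc]
  constructor <;> linarith

theorem not_exists_joint_effect_effectX_effectY :
    ¬∃ h : (ℝ × ℝ) →ᵃ[ℝ] ℝ, ∀ x ∈ disc,
      0 ≤ h x ∧ h x ≤ effectX x ∧ h x ≤ effectY x ∧ effectX x + effectY x - 1 ≤ h x := by
  rintro ⟨h, hh⟩
  have hpar := h.apply_add_apply_of_add_eq (p := (3 / 5, 3 / 5)) (q := (-(3 / 5), -(3 / 5)))
    (r := (-(3 / 5), 3 / 5)) (s := (3 / 5, -(3 / 5))) (by norm_num)
  have h₁ := (hh (3 / 5, 3 / 5) (by norm_num [disc])).2.2.2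
  have h₂ := (hh (-(3 / 5), -(3 / 5)) (by norm_num [disc])).1
  have h₃ := (hh (-(3 / 5), 3 / 5) (by norm_num [disc])).2.1
  have h₄ := (hh (3 / 5, -(3 / 5)) (by norm_num [disc])).2.2.1
  simp only [effectX_apply, effectY_apply] at h₁ h₃ h₄
  linarith

/-- Triangle-in-circle: every pair of measurements with effects in `E` is
`E(K)`-compatible (since the triangle is a simplex), but there is a pair of
two-outcome measurements with effects in `E` that admits no joint measurement
with effects in `E`. -/
theorem triangle_in_circle_EK_compatible_but_E_incompatible :
    (∀ (n₁ n₂ : ℕ) (f : Fin n₁ → ((ℝ × ℝ) →ᵃ[ℝ] ℝ)) (g : Fin n₂ → ((ℝ × ℝ) →ᵃ[ℝ] ℝ)),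
      (∀ i, f i ∈ discEffects) → (∀ j, g j ∈ discEffects) →
      (∀ x ∈ triangle, ∑ i, f i x = 1) → (∀ x ∈ triangle, ∑ j, g j x = 1) →
      ∃ h : Fin n₁ → Fin n₂ → ((ℝ × ℝ) →ᵃ[ℝ] ℝ),
        (∀ i j, ∀ x ∈ triangle, h i j x ∈ Set.Icc (0 : ℝ) 1) ∧
        (∀ i, ∀ x ∈ triangle, f i x = ∑ j, h i j x) ∧
        (∀ j, ∀ x ∈ triangle, g j x = ∑ i, h i j x)) ∧
    (∃ f g : (ℝ × ℝ) →ᵃ[ℝ] ℝ, f ∈ discEffects ∧ g ∈ discEffects ∧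
      ¬∃ h₁₁ h₁₂ h₂₁ h₂₂ : (ℝ × ℝ) →ᵃ[ℝ] ℝ,
        h₁₁ ∈ discEffects ∧ h₁₂ ∈ discEffects ∧ h₂₁ ∈ discEffects ∧ h₂₂ ∈ discEffects ∧
        (∀ x ∈ triangle, h₁₁ x + h₁₂ x = f x) ∧
        (∀ x ∈ triangle, h₁₁ x + h₂₁ x = g x) ∧
        (∀ x ∈ triangle, h₁₁ x + h₁₂ x + h₂₁ x + h₂₂ x = 1)) := by
  refine ⟨fun n₁ n₂ f g hf hg hf₁ hg₁ ↦ ?_, effectX, effectY, effectX_mem_discEffects,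
    effectY_mem_discEffects, ?_⟩
  · obtain ⟨h, hh, hfh, hgh⟩ := triangleBasis.exists_joint_of_nonneg_of_sum_eq_one f g
      (fun i k ↦ (hf i _ (triangleBasis_mem_disc k)).1)
      (fun j k ↦ (hg j _ (triangleBasis_mem_disc k)).1)
      (fun k ↦ hf₁ _ (triangleBasis_mem_triangle k)) (fun k ↦ hg₁ _ (triangleBasis_mem_triangle k))
    refine ⟨h, triangle_eq_convexHull ▸ hh, fun i x _ ↦ ?_, fun j x _ ↦ ?_⟩
    · rw [← hfh i, AffineMap.finset_sum_apply]
    · rw [← hgh j, AffineMap.finset_sum_apply]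
  · rintro ⟨h₁₁, h₁₂, h₂₁, h₂₂, e₁₁, e₁₂, e₂₁, e₂₂, hX, hY, hXY⟩
    have hX' : ∀ x, h₁₁ x + h₁₂ x = effectX x :=
      DFunLike.congr_fun (AffineMap.eq_of_eqOn_triangle (F := h₁₁ + h₁₂) hX)
    have hY' : ∀ x, h₁₁ x + h₂₁ x = effectY x :=
      DFunLike.congr_fun (AffineMap.eq_of_eqOn_triangle (F := h₁₁ + h₂₁) hY)
    have hXY' : ∀ x, h₁₁ x + h₁₂ x + h₂₁ x + h₂₂ x = 1 :=
      DFunLike.congr_fun (AffineMap.eq_of_eqOn_triangle (F := h₁₁ + h₁₂ + h₂₁ + h₂₂)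
        (G := AffineMap.const ℝ _ 1) hXY)
    refine not_exists_joint_effect_effectX_effectY
      ⟨h₁₁, fun x hx ↦ ⟨(e₁₁ x hx).1, ?_, ?_, ?_⟩⟩ <;>
      linarith [hX' x, hY' x, hXY' x, (e₁₂ x hx).1, (e₂₁ x hx).1, (e₂₂ x hx).1]
end
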